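/- arXiv:2202.09079 — 6 statements merged into one kernel-verified Lean document; each statement's English description precedes it below -/
import Mathlib

section
/- Let (Ω, ℱ, ℙ) be a probability space, m ≥ 1 an integer, (ℱ_k)_{0 ≤ k ≤ m} a filtration, and C > 0. Suppose Θ_0, …, Θ_{m−1} are integrable real-valued random variables such that for every k < m: Θ_k is ℱ_{k+1}-measurable, 𝔼[Θ_k ∣ ℱ_k] = 0 almost surely, and ∑_{n=2}^∞ (1/n!) 𝔼[|Θ_k|^n ∣ ℱ_k] ≤ C/m almost surely (equivalently, 𝔼[e^{|Θ_k|} − 1 − |Θ_k| ∣ ℱ_k] ≤ C/m a.s.). Then 𝔼[exp(∑_{k=0}^{m−1} Θ_k)] ≤ e^C. -/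
/-!
Since `exp x ≤ 1 + x + (exp |x| - 1 - |x|)`, the conditional hypotheses give
`𝔼[exp Θ_k ∣ ℱ_k] ≤ 1 + C/m`. Conditioning on `ℱ_k` one step at a time therefore multiplies
`𝔼[exp (Θ_0 + ⋯ + Θ_k)]` by at most `1 + C/m`, and `(1 + C/m)^m ≤ e^C`.
-/

open MeasureTheory Filter
open scoped ENNReal

namespace Real

theorem exp_le_one_add_add_exp_abs_sub_one_sub_abs (x : ℝ) :
    exp x ≤ 1 + x + (exp |x| - 1 - |x|) := by
  rcases le_or_gt 0 x with hx | hx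
  · rw [abs_of_nonneg hx]
    linarith
  · rw [abs_of_neg hx]
    have hsinh : sinh x < x := sinh_lt_self_iff.2 hx
    rw [sinh_eq] at hsinh
    linarith

end Real

namespace MeasureTheory

variable {Ω : Type*} {m mΩ : MeasurableSpace Ω} {μ : Measure Ω}

section FiniteMeasure

variable [IsFiniteMeasure μ]

/-- Comparing the measures `h • μ` and `c • μ` on `m`-measurable sets avoids truncating the
possibly unbounded `f`. -/
theorem lintegral_mul_ofReal_le_of_condExp_le (hm : m ≤ mΩ) {f : Ω → ℝ≥0∞} (hf : Measurable[m] f)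
    {h : Ω → ℝ} (hh : Integrable h μ) (hh0 : 0 ≤ᵐ[μ] h) {c : ℝ}
    (hc : ∀ᵐ ω ∂μ, μ[h | m] ω ≤ c) :
    ∫⁻ ω, f ω * ENNReal.ofReal (h ω) ∂μ ≤ ENNReal.ofReal c * ∫⁻ ω, f ω ∂μ := by
  set ν := μ.withDensity fun ω => ENNReal.ofReal (h ω)
  have h_set : ∀ s, MeasurableSet[m] s → ν s ≤ (ENNReal.ofReal c • μ) s := by
    intro s hs
    rw [withDensity_apply _ (hm s hs), ← ofReal_integral_eq_lintegral_ofReal hh.integrableOn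
      (ae_restrict_of_ae hh0), ← setIntegral_condExp hm hh hs, Measure.smul_apply, smul_eq_mul]
    calc ENNReal.ofReal (∫ ω in s, μ[h | m] ω ∂μ)
        ≤ ENNReal.ofReal (∫ _ in s, c ∂μ) :=
          ENNReal.ofReal_le_ofReal <| setIntegral_mono_ae_restrict integrable_condExp.integrableOn
            (integrable_const c).integrableOn (ae_restrict_of_ae hc)
      _ = ENNReal.ofReal c * μ s := by
          rw [setIntegral_const, smul_eq_mul, mul_comm, ENNReal.ofReal_mul' measureReal_nonneg,
            ofReal_measureReal]
  have h_trim : ν.trim hm ≤ (ENNReal.ofReal c • μ).trim hm := by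
    refine Measure.le_iff.2 fun s hs => ?_
    rw [trim_measurableSet_eq hm hs, trim_measurableSet_eq hm hs]
    exact h_set s hs
  calc ∫⁻ ω, f ω * ENNReal.ofReal (h ω) ∂μ
      = ∫⁻ ω, f ω ∂ν := by
        rw [lintegral_withDensity_eq_lintegral_mul₀ hh.aemeasurable.ennreal_ofReal
          (hf.mono hm le_rfl).aemeasurable]
        simp_rw [Pi.mul_apply, mul_comm]
    _ = ∫⁻ ω, f ω ∂(ν.trim hm) := (lintegral_trim hm hf).symm
    _ ≤ ∫⁻ ω, f ω ∂((ENNReal.ofReal c • μ).trim hm) := lintegral_mono' h_trim le_rfl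
    _ = ENNReal.ofReal c * ∫⁻ ω, f ω ∂μ := by
        rw [lintegral_trim hm hf, lintegral_smul_measure, smul_eq_mul]

theorem lintegral_mul_ofReal_exp_le_of_condExp (hm : m ≤ mΩ) {f : Ω → ℝ≥0∞}
    (hf : Measurable[m] f) {X : Ω → ℝ} (hX : Integrable X μ)
    (hX_exp : Integrable (fun ω => Real.exp |X ω|) μ) (hX_cond : μ[X | m] =ᵐ[μ] 0) {c : ℝ}
    (hc : ∀ᵐ ω ∂μ, μ[fun ω => Real.exp |X ω| - 1 - |X ω| | m] ω ≤ c) :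
    ∫⁻ ω, f ω * ENNReal.ofReal (Real.exp (X ω)) ∂μ ≤ ENNReal.ofReal (1 + c) * ∫⁻ ω, f ω ∂μ := by
  set g : Ω → ℝ := fun ω => Real.exp |X ω| - 1 - |X ω|
  have hg : Integrable g μ := (hX_exp.sub (integrable_const 1)).sub hX.abs
  have hXg : Integrable (X + g) μ := hX.add hg
  have h_exp_le : ∀ ω, Real.exp (X ω) ≤ 1 + (X + g) ω := fun ω => by
    simpa only [Pi.add_apply, add_assoc] using Real.exp_le_one_add_add_exp_abs_sub_one_sub_abs (X ω)
  have h_cond : ∀ᵐ ω ∂μ, μ[fun ω => 1 + (X + g) ω | m] ω ≤ 1 + c := by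
    have h_add : μ[fun ω => 1 + (X + g) ω | m] =ᵐ[μ] (fun _ => 1) + (μ[X | m] + μ[g | m]) :=
      (condExp_add (integrable_const 1) hXg m).trans <| by
        rw [condExp_const hm]
        exact (condExp_add hX hg m).add_left
    filter_upwards [h_add, hX_cond, hc] with ω h_sum h_zero h_le
    rw [h_sum]
    simp only [Pi.add_apply, h_zero, Pi.zero_apply]
    linarith
  calc ∫⁻ ω, f ω * ENNReal.ofReal (Real.exp (X ω)) ∂μ
      ≤ ∫⁻ ω, f ω * ENNReal.ofReal (1 + (X + g) ω) ∂μ :=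
        lintegral_mono fun ω => mul_le_mul_right (ENNReal.ofReal_le_ofReal (h_exp_le ω)) _
    _ ≤ ENNReal.ofReal (1 + c) * ∫⁻ ω, f ω ∂μ :=
        lintegral_mul_ofReal_le_of_condExp_le hm hf ((integrable_const 1).add hXg)
          (Eventually.of_forall fun ω => (Real.exp_pos _).le.trans (h_exp_le ω)) h_cond

end FiniteMeasure

theorem lintegral_exp_sum_le_pow_of_condExp [IsProbabilityMeasure μ] (ℱ : Filtration ℕ mΩ)
    (Θ : ℕ → Ω → ℝ) {n : ℕ} {c : ℝ}
    (h_int : ∀ k < n, Integrable (Θ k) μ)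
    (h_meas : ∀ k < n, StronglyMeasurable[ℱ (k + 1)] (Θ k))
    (h_cond : ∀ k < n, μ[Θ k | ℱ k] =ᵐ[μ] 0)
    (h_exp_int : ∀ k < n, Integrable (fun ω => Real.exp |Θ k ω|) μ)
    (h_bound : ∀ k < n, ∀ᵐ ω ∂μ, μ[fun ω => Real.exp |Θ k ω| - 1 - |Θ k ω| | ℱ k] ω ≤ c) :
    ∫⁻ ω, ENNReal.ofReal (Real.exp (∑ k ∈ Finset.range n, Θ k ω)) ∂μ ≤
      ENNReal.ofReal (1 + c) ^ n := by
  suffices ∀ k ≤ n, ∫⁻ ω, ENNReal.ofReal (Real.exp (∑ j ∈ Finset.range k, Θ j ω)) ∂μ ≤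
      ENNReal.ofReal (1 + c) ^ k from this n le_rfl
  intro k hk
  induction k with
  | zero => simp
  | succ k ih =>
    have hk' : k < n := hk
    have h_partial : Measurable[ℱ k]
        fun ω => ENNReal.ofReal (Real.exp (∑ j ∈ Finset.range k, Θ j ω)) := by
      refine (Finset.measurable_sum _ fun j hj => ?_).exp.ennreal_ofReal
      have hjk : j < k := Finset.mem_range.1 hj
      exact (h_meas j (hjk.trans hk')).measurable.mono (ℱ.mono hjk) le_rfl
    calc ∫⁻ ω, ENNReal.ofReal (Real.exp (∑ j ∈ Finset.range (k + 1), Θ j ω)) ∂μ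
        = ∫⁻ ω, ENNReal.ofReal (Real.exp (∑ j ∈ Finset.range k, Θ j ω)) *
            ENNReal.ofReal (Real.exp (Θ k ω)) ∂μ := by
          simp_rw [Finset.sum_range_succ, Real.exp_add, ENNReal.ofReal_mul (Real.exp_pos _).le]
      _ ≤ ENNReal.ofReal (1 + c) *
            ∫⁻ ω, ENNReal.ofReal (Real.exp (∑ j ∈ Finset.range k, Θ j ω)) ∂μ :=
          lintegral_mul_ofReal_exp_le_of_condExp (ℱ.le k) h_partial (h_int k hk')
            (h_exp_int k hk') (h_cond k hk') (h_bound k hk')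
      _ ≤ ENNReal.ofReal (1 + c) * ENNReal.ofReal (1 + c) ^ k := by gcongr; exact ih hk'.le
      _ = ENNReal.ofReal (1 + c) ^ (k + 1) := (pow_succ' _ _).symm

end MeasureTheory

theorem stmt_0_general {Ω : Type*} {m0 : MeasurableSpace Ω} (μ : Measure Ω) [IsProbabilityMeasure μ]
    (m : ℕ) (hm : 1 ≤ m) (ℱ : Filtration ℕ m0) (C : ℝ)
    (Θ : ℕ → Ω → ℝ)
    (h_int : ∀ k < m, Integrable (Θ k) μ)
    (h_meas : ∀ k < m, StronglyMeasurable[ℱ (k + 1)] (Θ k))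
    (h_cond : ∀ k < m, μ[Θ k | ℱ k] =ᵐ[μ] 0)
    (h_exp_int : ∀ k < m, Integrable (fun ω => Real.exp (abs (Θ k ω))) μ)
    (h_bound : ∀ k < m,
      ∀ᵐ ω ∂μ,
        (μ[fun ω => Real.exp (abs (Θ k ω)) - 1 - abs (Θ k ω) | ℱ k]) ω ≤ C / m) :
    ∫⁻ ω, ENNReal.ofReal (Real.exp (∑ k ∈ Finset.range m, Θ k ω)) ∂μ ≤
      ENNReal.ofReal (Real.exp C) := by
  have hm0 : (m : ℝ) ≠ 0 := Nat.cast_ne_zero.2 (Nat.one_le_iff_ne_zero.1 hm)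
  calc ∫⁻ ω, ENNReal.ofReal (Real.exp (∑ k ∈ Finset.range m, Θ k ω)) ∂μ
      ≤ ENNReal.ofReal (1 + C / m) ^ m :=
        lintegral_exp_sum_le_pow_of_condExp ℱ Θ h_int h_meas h_cond h_exp_int h_bound
    _ ≤ ENNReal.ofReal (Real.exp (C / m)) ^ m := by
        gcongr
        linarith [Real.add_one_le_exp (C / m)]
    _ = ENNReal.ofReal (Real.exp C) := by
        rw [← ENNReal.ofReal_pow (Real.exp_pos _).le, ← Real.exp_nat_mul, mul_div_cancel₀ _ hm0]

/-- Lemma 6.1 of the paper: exponential-moment bound for sums of martingale differences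
whose conditional exponential moments are controlled by `C / m`. -/
theorem stmt_0 {Ω : Type*} {m0 : MeasurableSpace Ω} (μ : Measure Ω) [IsProbabilityMeasure μ]
    (m : ℕ) (hm : 1 ≤ m) (ℱ : Filtration ℕ m0) (C : ℝ) (hC : 0 < C)
    (Θ : ℕ → Ω → ℝ)
    (h_int : ∀ k < m, Integrable (Θ k) μ)
    (h_meas : ∀ k < m, StronglyMeasurable[ℱ (k + 1)] (Θ k))
    (h_cond : ∀ k < m, μ[Θ k | ℱ k] =ᵐ[μ] 0)
    (h_exp_int : ∀ k < m, Integrable (fun ω => Real.exp (abs (Θ k ω))) μ)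
    (h_bound : ∀ k < m,
      ∀ᵐ ω ∂μ,
        (μ[fun ω => Real.exp (abs (Θ k ω)) - 1 - abs (Θ k ω) | ℱ k]) ω ≤ C / m) :
    ∫⁻ ω, ENNReal.ofReal (Real.exp (∑ k ∈ Finset.range m, Θ k ω)) ∂μ ≤
      ENNReal.ofReal (Real.exp C) :=
  stmt_0_general μ m hm ℱ C Θ h_int h_meas h_cond h_exp_int h_bound
end

section
/- Let (Ω, ℱ, ℙ) be a probability space, m ≥ 1 an integer, (ℱ_k)_{0 ≤ k ≤ m} a filtration, and C > 0. Suppose Θ_0, …, Θ_{m−1} are integrable real-valued random variables such that for every k < m: Θ_k is ℱ_{k+1}-measurable, 𝔼[Θ_k ∣ ℱ_k] = 0 almost surely, and ∑_{n=2}^∞ (1/n!) 𝔼[|Θ_k|^n ∣ ℱ_k] ≤ C/m almost surely. Then for every real b, ℙ(∑_{k=0}^{m−1} Θ_k ≥ b) ≤ e^{C − b}. -/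
/-!
Pointwise `exp x ≤ 1 + x + (exp |x| - 1 - |x|)`, so the martingale-difference condition gives
`𝔼[exp Θₖ | ℱₖ] ≤ 1 + C / m`. Pulling out the `ℱₖ`-measurable factor `exp (Θ₀ + ⋯ + Θₖ₋₁)` and
iterating gives `𝔼[exp (∑ Θₖ)] ≤ (1 + C / m) ^ m ≤ exp C`, and the exponential Chebyshev
inequality concludes. Working with the Lebesgue conditional expectation `μ⁻[·|ℱₖ]` avoids having
to show that the partial products `exp (Θ₀ + ⋯ + Θₖ₋₁)` are integrable.
-/

open MeasureTheory Filter
open scoped ENNReal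

theorem Real.one_add_div_pow_le_exp {x : ℝ} (n : ℕ) (hx : -(n : ℝ) ≤ x) :
    (1 + x / n) ^ n ≤ Real.exp x := by
  have h := Real.one_sub_div_pow_le_exp_neg (n := n) (t := -x) (by linarith)
  rwa [neg_div, sub_neg_eq_add, neg_neg] at h

theorem Real.exp_sub_one_sub_le_exp_abs_sub_one_sub (x : ℝ) :
    Real.exp x - 1 - x ≤ Real.exp |x| - 1 - |x| := by
  rcases le_or_gt 0 x with hx | hx
  · rw [abs_of_nonneg hx]
  · have h := Real.self_le_sinh_iff.2 (neg_nonneg.2 hx.le)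
    rw [Real.sinh_eq, neg_neg] at h
    rw [abs_of_neg hx]
    linarith

namespace MeasureTheory

variable {Ω : Type*} {m m0 : MeasurableSpace Ω} {μ : Measure Ω}

theorem lintegral_mul_condLExp (hm : m ≤ m0) [SigmaFinite (μ.trim hm)] {f g : Ω → ℝ≥0∞}
    (hf : Measurable[m] f) (hg : AEMeasurable g μ) :
    ∫⁻ ω, f ω * μ⁻[g|m] ω ∂μ = ∫⁻ ω, f ω * g ω ∂μ := by
  have h_trim : (μ.withDensity μ⁻[g|m]).trim hm = (μ.withDensity g).trim hm := by
    refine @Measure.ext _ m _ _ fun s hs => ?_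
    rw [trim_measurableSet_eq hm hs, trim_measurableSet_eq hm hs, withDensity_apply _ (hm s hs),
      withDensity_apply _ (hm s hs), setLIntegral_condLExp _ _ _ hs]
  have hf' : AEMeasurable f μ := (hf.mono hm le_rfl).aemeasurable
  simp_rw [mul_comm (f _)]
  calc ∫⁻ ω, μ⁻[g|m] ω * f ω ∂μ = ∫⁻ ω, f ω ∂μ.withDensity μ⁻[g|m] :=
        (lintegral_withDensity_eq_lintegral_mul₀
          ((measurable_condLExp _ _ _).mono hm le_rfl).aemeasurable hf').symm
    _ = ∫⁻ ω, f ω ∂μ.withDensity g := by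
        rw [← lintegral_trim hm hf, h_trim, lintegral_trim hm hf]
    _ = ∫⁻ ω, g ω * f ω ∂μ := lintegral_withDensity_eq_lintegral_mul₀ hg hf'

theorem lintegral_mul_le_of_condLExp_le (hm : m ≤ m0) [SigmaFinite (μ.trim hm)]
    {f g : Ω → ℝ≥0∞} {c : ℝ≥0∞} (hf : Measurable[m] f) (hg : AEMeasurable g μ)
    (hgc : ∀ᵐ ω ∂μ, μ⁻[g|m] ω ≤ c) :
    ∫⁻ ω, f ω * g ω ∂μ ≤ c * ∫⁻ ω, f ω ∂μ := by
  rw [← lintegral_mul_condLExp hm hf hg, ← lintegral_const_mul c (hf.mono hm le_rfl)]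
  refine lintegral_mono_ae (hgc.mono fun ω hω => ?_)
  rw [mul_comm c]
  exact mul_le_mul_right hω _

theorem lintegral_prod_le_prod_mul_measure_univ {ℱ : Filtration ℕ m0} [SigmaFiniteFiltration μ ℱ]
    {Y : ℕ → Ω → ℝ≥0∞} {c : ℕ → ℝ≥0∞} {n : ℕ}
    (hY : ∀ k < n, Measurable[ℱ (k + 1)] (Y k)) (hc : ∀ k < n, ∀ᵐ ω ∂μ, μ⁻[Y k|ℱ k] ω ≤ c k) :
    ∫⁻ ω, ∏ k ∈ Finset.range n, Y k ω ∂μ ≤ (∏ k ∈ Finset.range n, c k) * μ Set.univ := by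
  induction n with
  | zero => simp
  | succ n ih =>
    have h_prev : Measurable[ℱ n] fun ω => ∏ k ∈ Finset.range n, Y k ω :=
      Finset.measurable_prod _ fun k hk => by
        rw [Finset.mem_range] at hk
        exact (hY k (Nat.lt_succ_of_lt hk)).mono (ℱ.mono hk) le_rfl
    have h_last : AEMeasurable (Y n) μ := ((hY n n.lt_succ_self).mono (ℱ.le _) le_rfl).aemeasurable
    simp_rw [Finset.prod_range_succ]
    calc ∫⁻ ω, (∏ k ∈ Finset.range n, Y k ω) * Y n ω ∂μ
        ≤ c n * ∫⁻ ω, ∏ k ∈ Finset.range n, Y k ω ∂μ :=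
          lintegral_mul_le_of_condLExp_le (ℱ.le n) h_prev h_last (hc n n.lt_succ_self)
      _ ≤ c n * ((∏ k ∈ Finset.range n, c k) * μ Set.univ) := by
          gcongr
          exact ih (fun k hk => hY k (by omega)) (fun k hk => hc k (by omega))
      _ = (∏ k ∈ Finset.range n, c k) * c n * μ Set.univ := by ring

theorem integrable_exp_of_integrable_exp_abs {X : Ω → ℝ} (hX : AEStronglyMeasurable X μ)
    (hX_exp : Integrable (fun ω => Real.exp |X ω|) μ) :
    Integrable (fun ω => Real.exp (X ω)) μ :=
  hX_exp.mono (Real.continuous_exp.comp_aestronglyMeasurable hX) <|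
    ae_of_all _ fun ω => by simpa using le_abs_self (X ω)

theorem condExp_exp_le_one_add [IsFiniteMeasure μ] (hm : m ≤ m0) {X : Ω → ℝ} {c : ℝ}
    (hX : Integrable X μ) (hX_exp : Integrable (fun ω => Real.exp |X ω|) μ)
    (hX_zero : μ[X|m] =ᵐ[μ] 0)
    (hc : ∀ᵐ ω ∂μ, μ[fun ω => Real.exp |X ω| - 1 - |X ω| | m] ω ≤ c) :
    ∀ᵐ ω ∂μ, μ[fun ω => Real.exp (X ω) | m] ω ≤ 1 + c := by
  set φ : Ω → ℝ := fun ω => Real.exp |X ω| - 1 - |X ω|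
  have hφ : Integrable φ μ := (hX_exp.sub (integrable_const 1)).sub hX.abs
  have h_exp := integrable_exp_of_integrable_exp_abs hX.1 hX_exp
  have h_le : μ[fun ω => Real.exp (X ω) | m] ≤ᵐ[μ] μ[(fun _ => 1) + X + φ | m] :=
    condExp_mono h_exp (((integrable_const 1).add hX).add hφ) <| ae_of_all _ fun ω => by
      have := Real.exp_sub_one_sub_le_exp_abs_sub_one_sub (X ω)
      simp only [Pi.add_apply, φ]
      linarith
  have h_add : μ[(fun _ => 1) + X + φ | m] =ᵐ[μ] μ[fun _ => 1 | m] + μ[X|m] + μ[φ|m] :=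
    (condExp_add ((integrable_const 1).add hX) hφ m).trans
      ((condExp_add (integrable_const 1) hX m).add EventuallyEq.rfl)
  filter_upwards [h_le, h_add, hX_zero, hc] with ω h_le h_add hX_zero hc
  rw [h_add, condExp_const hm] at h_le
  simp only [Pi.add_apply, hX_zero, Pi.zero_apply] at h_le
  linarith

theorem condLExp_ofReal_exp_le_ofReal_one_add [IsFiniteMeasure μ] (hm : m ≤ m0) {X : Ω → ℝ}
    {c : ℝ} (hX : Integrable X μ) (hX_exp : Integrable (fun ω => Real.exp |X ω|) μ)
    (hX_zero : μ[X|m] =ᵐ[μ] 0)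
    (hc : ∀ᵐ ω ∂μ, μ[fun ω => Real.exp |X ω| - 1 - |X ω| | m] ω ≤ c) :
    ∀ᵐ ω ∂μ, μ⁻[fun ω => ENNReal.ofReal (Real.exp (X ω)) | m] ω ≤ ENNReal.ofReal (1 + c) := by
  filter_upwards [condLExp_ofReal m (integrable_exp_of_integrable_exp_abs hX.1 hX_exp)
      (ae_of_all _ fun ω => (Real.exp_pos (X ω)).le),
    condExp_exp_le_one_add hm hX hX_exp hX_zero hc] with ω h_eq h_le
  rw [h_eq]
  exact ENNReal.ofReal_le_ofReal h_le

theorem measure_ge_le_exp_neg_mul_lintegral {X : Ω → ℝ} (hX : AEMeasurable X μ) (b : ℝ) :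
    μ {ω | b ≤ X ω} ≤
      ENNReal.ofReal (Real.exp (-b)) * ∫⁻ ω, ENNReal.ofReal (Real.exp (X ω)) ∂μ := by
  have h_set : {ω | b ≤ X ω} =
      {ω | ENNReal.ofReal (Real.exp b) ≤ ENNReal.ofReal (Real.exp (X ω))} := by
    ext ω
    simp [ENNReal.ofReal_le_ofReal_iff (Real.exp_pos _).le]
  rw [h_set, Real.exp_neg, ENNReal.ofReal_inv_of_pos (Real.exp_pos b), mul_comm,
    ← div_eq_mul_inv]
  exact meas_ge_le_lintegral_div (by fun_prop) (by positivity) ENNReal.ofReal_ne_top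

theorem lintegral_ofReal_exp_sum_le [IsProbabilityMeasure μ] {ℱ : Filtration ℕ m0}
    {Θ : ℕ → Ω → ℝ} {c : ℝ} {n : ℕ}
    (h_int : ∀ k < n, Integrable (Θ k) μ)
    (h_meas : ∀ k < n, StronglyMeasurable[ℱ (k + 1)] (Θ k))
    (h_cond : ∀ k < n, μ[Θ k | ℱ k] =ᵐ[μ] 0)
    (h_exp_int : ∀ k < n, Integrable (fun ω => Real.exp |Θ k ω|) μ)
    (h_bound : ∀ k < n,
      ∀ᵐ ω ∂μ, μ[fun ω => Real.exp |Θ k ω| - 1 - |Θ k ω| | ℱ k] ω ≤ c) :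
    ∫⁻ ω, ENNReal.ofReal (Real.exp (∑ k ∈ Finset.range n, Θ k ω)) ∂μ ≤
      ENNReal.ofReal (1 + c) ^ n := calc
  _ = ∫⁻ ω, ∏ k ∈ Finset.range n, ENNReal.ofReal (Real.exp (Θ k ω)) ∂μ := by
    simp_rw [Real.exp_sum, ENNReal.ofReal_prod_of_nonneg fun k _ => (Real.exp_pos _).le]
  _ ≤ (∏ _k ∈ Finset.range n, ENNReal.ofReal (1 + c)) * μ Set.univ :=
    lintegral_prod_le_prod_mul_measure_univ
      (fun k hk => ((h_meas k hk).measurable.exp).ennreal_ofReal)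
      (fun k hk => condLExp_ofReal_exp_le_ofReal_one_add (ℱ.le k) (h_int k hk)
        (h_exp_int k hk) (h_cond k hk) (h_bound k hk))
  _ = ENNReal.ofReal (1 + c) ^ n := by
    rw [Finset.prod_const, Finset.card_range, measure_univ, mul_one]

end MeasureTheory

theorem stmt_1_general {Ω : Type*} {m0 : MeasurableSpace Ω} (μ : Measure Ω) [IsProbabilityMeasure μ]
    (m : ℕ) (ℱ : Filtration ℕ m0) (C : ℝ) (hC : 0 < C)
    (Θ : ℕ → Ω → ℝ)
    (h_int : ∀ k < m, Integrable (Θ k) μ)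
    (h_meas : ∀ k < m, StronglyMeasurable[ℱ (k + 1)] (Θ k))
    (h_cond : ∀ k < m, μ[Θ k | ℱ k] =ᵐ[μ] 0)
    (h_exp_int : ∀ k < m, Integrable (fun ω => Real.exp (abs (Θ k ω))) μ)
    (h_bound : ∀ k < m,
      ∀ᵐ ω ∂μ,
        (μ[fun ω => Real.exp (abs (Θ k ω)) - 1 - abs (Θ k ω) | ℱ k]) ω ≤ C / m) :
    ∀ b : ℝ,
      μ {ω | b ≤ ∑ k ∈ Finset.range m, Θ k ω} ≤ ENNReal.ofReal (Real.exp (C - b)) := by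
  intro b
  have h_sum : AEMeasurable (fun ω => ∑ k ∈ Finset.range m, Θ k ω) μ :=
    (Finset.measurable_sum _ fun k hk =>
      ((h_meas k (Finset.mem_range.1 hk)).mono (ℱ.le _)).measurable).aemeasurable
  have h_pow : ENNReal.ofReal (1 + C / m) ^ m ≤ ENNReal.ofReal (Real.exp C) := by
    rw [← ENNReal.ofReal_pow (by positivity)]
    exact ENNReal.ofReal_le_ofReal <|
      Real.one_add_div_pow_le_exp m (by linarith [m.cast_nonneg (α := ℝ)])
  calc μ {ω | b ≤ ∑ k ∈ Finset.range m, Θ k ω}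
      ≤ ENNReal.ofReal (Real.exp (-b)) *
          ∫⁻ ω, ENNReal.ofReal (Real.exp (∑ k ∈ Finset.range m, Θ k ω)) ∂μ :=
        measure_ge_le_exp_neg_mul_lintegral h_sum b
    _ ≤ ENNReal.ofReal (Real.exp (-b)) * ENNReal.ofReal (Real.exp C) := by
        gcongr
        exact (lintegral_ofReal_exp_sum_le h_int h_meas h_cond h_exp_int h_bound).trans h_pow
    _ = ENNReal.ofReal (Real.exp (C - b)) := by
        rw [← ENNReal.ofReal_mul (Real.exp_pos _).le, ← Real.exp_add, neg_add_eq_sub]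

/-- Lemma 6.1 of the paper combined with the exponential Chebyshev inequality:
a tail bound for sums of martingale differences with controlled conditional
exponential moments. -/
theorem stmt_1 {Ω : Type*} {m0 : MeasurableSpace Ω} (μ : Measure Ω) [IsProbabilityMeasure μ]
    (m : ℕ) (hm : 1 ≤ m) (ℱ : Filtration ℕ m0) (C : ℝ) (hC : 0 < C)
    (Θ : ℕ → Ω → ℝ)
    (h_int : ∀ k < m, Integrable (Θ k) μ)
    (h_meas : ∀ k < m, StronglyMeasurable[ℱ (k + 1)] (Θ k))
    (h_cond : ∀ k < m, μ[Θ k | ℱ k] =ᵐ[μ] 0)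
    (h_exp_int : ∀ k < m, Integrable (fun ω => Real.exp (abs (Θ k ω))) μ)
    (h_bound : ∀ k < m,
      ∀ᵐ ω ∂μ,
        (μ[fun ω => Real.exp (abs (Θ k ω)) - 1 - abs (Θ k ω) | ℱ k]) ω ≤ C / m) :
    ∀ b : ℝ,
      μ {ω | b ≤ ∑ k ∈ Finset.range m, Θ k ω} ≤ ENNReal.ofReal (Real.exp (C - b)) :=
  stmt_1_general μ m ℱ C hC Θ h_int h_meas h_cond h_exp_int h_bound
end

section
/- With H, S, F, λ₁, τ, K, L as in the context, for all x, y ∈ H one has ‖S(x + τ F(x)) − S(y + τ F(y))‖² ≤ e^{−2 λ₁ τ} (1 + 2Kτ + L² τ²) ‖x − y‖². -/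
/-! With `u = x - y` and `v = F x - F y`, expand
`‖u + τ • v‖² = ‖u‖² + 2τ⟨u, v⟩ + τ²‖v‖²`; the one-sided Lipschitz condition bounds the
cross term by `2Kτ‖u‖²` and the Lipschitz condition the last term by `L²τ²‖u‖²`.
Squaring the contraction bound for `S` contributes the factor `e^{-2λ₁τ}`. -/

theorem norm_add_smul_sq_le {H : Type*} [NormedAddCommGroup H] [InnerProductSpace ℝ H]
    {u v : H} {τ K L : ℝ} (hτ : 0 ≤ τ) (hK : inner ℝ u v ≤ K * ‖u‖ ^ 2)
    (hL : ‖v‖ ≤ L * ‖u‖) :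
    ‖u + τ • v‖ ^ 2 ≤ (1 + 2 * K * τ + L ^ 2 * τ ^ 2) * ‖u‖ ^ 2 := by
  have hexpand : ‖u + τ • v‖ ^ 2 = ‖u‖ ^ 2 + 2 * τ * inner ℝ u v + τ ^ 2 * ‖v‖ ^ 2 := by
    rw [norm_add_sq_real, inner_smul_right, norm_smul, Real.norm_eq_abs, mul_pow, sq_abs]
    ring
  have hv : ‖v‖ ^ 2 ≤ L ^ 2 * ‖u‖ ^ 2 := by
    simpa only [mul_pow] using pow_le_pow_left₀ (norm_nonneg v) hL 2
  rw [hexpand]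
  nlinarith [mul_le_mul_of_nonneg_left hK hτ, mul_le_mul_of_nonneg_left hv (sq_nonneg τ)]

theorem norm_euler_step_sub_sq_le {H : Type*} [NormedAddCommGroup H] [InnerProductSpace ℝ H]
    {F : H → H} {τ K L : ℝ} (hτ : 0 ≤ τ)
    (hF1 : ∀ x y : H, inner ℝ (x - y) (F x - F y) ≤ K * ‖x - y‖ ^ 2)
    (hF2 : ∀ x y : H, ‖F x - F y‖ ≤ L * ‖x - y‖) (x y : H) :
    ‖(x + τ • F x) - (y + τ • F y)‖ ^ 2 ≤ (1 + 2 * K * τ + L ^ 2 * τ ^ 2) * ‖x - y‖ ^ 2 := by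
  have hsplit : (x + τ • F x) - (y + τ • F y) = (x - y) + τ • (F x - F y) := by
    rw [smul_sub]; abel
  rw [hsplit]
  exact norm_add_smul_sq_le hτ (hF1 x y) (hF2 x y)

theorem sq_norm_le_exp_mul_sq_norm {H : Type*} [NormedAddCommGroup H]
    {S : H → H} {a : ℝ} (hS : ∀ z : H, ‖S z‖ ≤ Real.exp (-a) * ‖z‖) (z : H) :
    ‖S z‖ ^ 2 ≤ Real.exp (-2 * a) * ‖z‖ ^ 2 := by
  calc ‖S z‖ ^ 2 ≤ (Real.exp (-a) * ‖z‖) ^ 2 := pow_le_pow_left₀ (norm_nonneg _) (hS z) 2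
    _ = Real.exp (-2 * a) * ‖z‖ ^ 2 := by rw [mul_pow, ← Real.exp_nat_mul]; ring_nf

theorem stmt_3_general {H : Type*} [NormedAddCommGroup H] [InnerProductSpace ℝ H]
    (S : H →L[ℝ] H) (F : H → H) (lam1 τ K L : ℝ)
    (hτ : 0 < τ)
    (hS : ∀ x : H, ‖S x‖ ≤ Real.exp (-lam1 * τ) * ‖x‖)
    (hF1 : ∀ x y : H, (inner ℝ (x - y) (F x - F y) : ℝ) ≤ K * ‖x - y‖ ^ 2)
    (hF2 : ∀ x y : H, ‖F x - F y‖ ≤ L * ‖x - y‖)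
    (x y : H) :
    ‖S (x + τ • F x) - S (y + τ • F y)‖ ^ 2 ≤
      Real.exp (-2 * lam1 * τ) * (1 + 2 * K * τ + L ^ 2 * τ ^ 2) * ‖x - y‖ ^ 2 := by
  have hS' : ∀ z : H, ‖S z‖ ≤ Real.exp (-(lam1 * τ)) * ‖z‖ := by
    simpa only [neg_mul] using hS
  rw [← map_sub, mul_assoc, show -2 * lam1 * τ = -2 * (lam1 * τ) by ring]
  calc _ ≤ Real.exp (-2 * (lam1 * τ)) * ‖(x + τ • F x) - (y + τ • F y)‖ ^ 2 :=
        sq_norm_le_exp_mul_sq_norm hS' _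
    _ ≤ _ := mul_le_mul_of_nonneg_left (norm_euler_step_sub_sq_le hτ.le hF1 hF2 x y)
        (Real.exp_pos _).le

/-- One-step contraction estimate from the proof of Proposition 2.6 of the paper:
`‖S(x + τF(x)) − S(y + τF(y))‖² ≤ e^{−2λ₁τ}(1 + 2Kτ + L²τ²)‖x − y‖²`. -/
theorem stmt_3 {H : Type*} [NormedAddCommGroup H] [InnerProductSpace ℝ H]
    (S : H →L[ℝ] H) (F : H → H) (lam1 τ K L : ℝ)
    (hlam1 : 0 < lam1) (hτ : 0 < τ)
    (hS : ∀ x : H, ‖S x‖ ≤ Real.exp (-lam1 * τ) * ‖x‖)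
    (hK : K < lam1)
    (hF1 : ∀ x y : H, (inner ℝ (x - y) (F x - F y) : ℝ) ≤ K * ‖x - y‖ ^ 2)
    (hL : 0 < L)
    (hF2 : ∀ x y : H, ‖F x - F y‖ ≤ L * ‖x - y‖)
    (x y : H) :
    ‖S (x + τ • F x) - S (y + τ • F y)‖ ^ 2 ≤
      Real.exp (-2 * lam1 * τ) * (1 + 2 * K * τ + L ^ 2 * τ ^ 2) * ‖x - y‖ ^ 2 :=
  stmt_3_general S F lam1 τ K L hτ hS hF1 hF2 x y
end

section
/- With H, S, F, λ₁, τ, K, L as in the context, assume in addition 0 < τ ≤ (λ₁ − K)/(4L²). Let (w_k)_{k ∈ ℕ} be any sequence in H, and let (x_k), (y_k) be sequences in H satisfying x_{k+1} = S(x_k + τ F(x_k)) + w_k and y_{k+1} = S(y_k + τ F(y_k)) + w_k for all k. Then for every k ∈ ℕ and every real p ≥ 1, ‖x_k − y_k‖^{2p} ≤ e^{−(λ₁ − K) p k τ} ‖x_0 − y_0‖^{2p}. -/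
/-!
The difference `d = x − y` of two runs driven by the same noise satisfies
`d_{k+1} = S (d_k + τ g_k)` with `g_k = F x_k − F y_k`. Expanding the square and using the
one-sided and the global Lipschitz bounds gives `‖d_k + τ g_k‖² ≤ e^{(2K + τL²)τ} ‖d_k‖²`, and the
step-size restriction `τL² ≤ λ₁ − K` together with `‖S‖ ≤ e^{−λ₁τ}` turns this into the
contraction `‖d_{k+1}‖² ≤ e^{−(λ₁−K)τ} ‖d_k‖²`. Iterate and raise to the power `p`.
-/

open Real

section

variable {H : Type*} [NormedAddCommGroup H] [InnerProductSpace ℝ H]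

def expEulerStep (S : H →L[ℝ] H) (F : H → H) (τ : ℝ) (x : H) : H :=
  S (x + τ • F x)

theorem norm_add_smul_sq_le_s4 {d g : H} {K L τ : ℝ} (hdg : inner ℝ d g ≤ K * ‖d‖ ^ 2)
    (hg : ‖g‖ ≤ L * ‖d‖) (hτ : 0 ≤ τ) :
    ‖d + τ • g‖ ^ 2 ≤ (1 + (2 * K + τ * L ^ 2) * τ) * ‖d‖ ^ 2 := by
  have hg2 : ‖g‖ ^ 2 ≤ L ^ 2 * ‖d‖ ^ 2 := by
    simpa only [mul_pow] using pow_le_pow_left₀ (norm_nonneg g) hg 2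
  rw [norm_add_sq_real, real_inner_smul_right, norm_smul, mul_pow, Real.norm_eq_abs, sq_abs]
  nlinarith [mul_le_mul_of_nonneg_left hdg hτ, mul_le_mul_of_nonneg_left hg2 (sq_nonneg τ)]

theorem norm_expEulerStep_sub_sq_le {S : H →L[ℝ] H} {F : H → H} {lam1 τ K L : ℝ}
    (hS : ∀ x : H, ‖S x‖ ≤ exp (-lam1 * τ) * ‖x‖)
    (hF1 : ∀ x y : H, inner ℝ (x - y) (F x - F y) ≤ K * ‖x - y‖ ^ 2)
    (hF2 : ∀ x y : H, ‖F x - F y‖ ≤ L * ‖x - y‖)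
    (hτ : 0 ≤ τ) (hτL : τ * L ^ 2 ≤ lam1 - K) (x y : H) :
    ‖expEulerStep S F τ x - expEulerStep S F τ y‖ ^ 2 ≤
      exp (-(lam1 - K) * τ) * ‖x - y‖ ^ 2 := by
  have hdiff : expEulerStep S F τ x - expEulerStep S F τ y = S (x - y + τ • (F x - F y)) := by
    rw [expEulerStep, expEulerStep, ← map_sub, smul_sub]
    congr 1
    abel
  set d := x - y
  set g := F x - F y
  have hexponent : -lam1 * τ * 2 + (2 * K + τ * L ^ 2) * τ ≤ -(lam1 - K) * τ := by
    nlinarith [mul_le_mul_of_nonneg_right hτL hτ]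
  calc ‖expEulerStep S F τ x - expEulerStep S F τ y‖ ^ 2
      ≤ (exp (-lam1 * τ) * ‖d + τ • g‖) ^ 2 := by
        rw [hdiff]
        exact pow_le_pow_left₀ (norm_nonneg _) (hS _) 2
    _ = exp (-lam1 * τ * 2) * ‖d + τ • g‖ ^ 2 := by
        rw [mul_pow, ← Real.exp_nat_mul]
        ring_nf
    _ ≤ exp (-lam1 * τ * 2) * (exp ((2 * K + τ * L ^ 2) * τ) * ‖d‖ ^ 2) := by
        gcongr
        calc ‖d + τ • g‖ ^ 2 ≤ (1 + (2 * K + τ * L ^ 2) * τ) * ‖d‖ ^ 2 :=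
              norm_add_smul_sq_le_s4 (hF1 x y) (hF2 x y) hτ
          _ ≤ exp ((2 * K + τ * L ^ 2) * τ) * ‖d‖ ^ 2 := by
              gcongr
              linarith [add_one_le_exp ((2 * K + τ * L ^ 2) * τ)]
    _ ≤ exp (-(lam1 - K) * τ) * ‖d‖ ^ 2 := by
        rw [← mul_assoc, ← exp_add]
        gcongr

end

theorem stmt_4_general {H : Type*} [NormedAddCommGroup H] [InnerProductSpace ℝ H]
    (S : H →L[ℝ] H) (F : H → H) (lam1 τ K L : ℝ)
    (hτ : 0 < τ)
    (hS : ∀ x : H, ‖S x‖ ≤ Real.exp (-lam1 * τ) * ‖x‖)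
    (hF1 : ∀ x y : H, (inner ℝ (x - y) (F x - F y) : ℝ) ≤ K * ‖x - y‖ ^ 2)
    (hL : 0 < L)
    (hF2 : ∀ x y : H, ‖F x - F y‖ ≤ L * ‖x - y‖)
    (hτ2 : τ ≤ (lam1 - K) / (4 * L ^ 2))
    (w x y : ℕ → H)
    (hx : ∀ k, x (k + 1) = S (x k + τ • F (x k)) + w k)
    (hy : ∀ k, y (k + 1) = S (y k + τ • F (y k)) + w k)
    (k : ℕ) (p : ℝ) (hp : 1 ≤ p) :
    ‖x k - y k‖ ^ (2 * p) ≤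
      Real.exp (-(lam1 - K) * p * (k : ℝ) * τ) * ‖x 0 - y 0‖ ^ (2 * p) := by
  have hτL : τ * L ^ 2 ≤ lam1 - K := by
    have := (le_div_iff₀ (by positivity : (0 : ℝ) < 4 * L ^ 2)).mp hτ2
    nlinarith [mul_nonneg hτ.le (sq_nonneg L)]
  have hstep : ∀ n, ‖x (n + 1) - y (n + 1)‖ ^ 2 ≤ exp (-(lam1 - K) * τ) * ‖x n - y n‖ ^ 2 := by
    intro n
    rw [hx, hy, add_sub_add_right_eq_sub]
    exact norm_expEulerStep_sub_sq_le hS hF1 hF2 hτ.le hτL _ _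
  have hiter := le_geom (u := fun n ↦ ‖x n - y n‖ ^ 2) (exp_pos _).le k fun n _ ↦ hstep n
  have hsq (z : H) : ‖z‖ ^ (2 * p) = (‖z‖ ^ 2) ^ p := by
    exact_mod_cast rpow_natCast_mul (norm_nonneg z) 2 p
  calc ‖x k - y k‖ ^ (2 * p) = (‖x k - y k‖ ^ 2) ^ p := hsq _
    _ ≤ (exp (-(lam1 - K) * τ) ^ k * ‖x 0 - y 0‖ ^ 2) ^ p :=
        rpow_le_rpow (sq_nonneg _) hiter (by linarith)
    _ = exp (-(lam1 - K) * p * k * τ) * ‖x 0 - y 0‖ ^ (2 * p) := by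
        rw [mul_rpow (by positivity) (sq_nonneg _), ← exp_nat_mul, ← exp_mul, hsq]
        ring_nf

/-- Pathwise (same-noise) exponential contraction of the exponential Euler scheme
(Proposition 2.6 of the paper): if `τ ≤ (λ₁ − K)/(4L²)`, then
`‖x_k − y_k‖^{2p} ≤ e^{−(λ₁−K)pkτ} ‖x₀ − y₀‖^{2p}` for all `k ∈ ℕ` and `p ≥ 1`. -/
theorem stmt_4 {H : Type*} [NormedAddCommGroup H] [InnerProductSpace ℝ H]
    (S : H →L[ℝ] H) (F : H → H) (lam1 τ K L : ℝ)
    (hlam1 : 0 < lam1) (hτ : 0 < τ)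
    (hS : ∀ x : H, ‖S x‖ ≤ Real.exp (-lam1 * τ) * ‖x‖)
    (hK : K < lam1)
    (hF1 : ∀ x y : H, (inner ℝ (x - y) (F x - F y) : ℝ) ≤ K * ‖x - y‖ ^ 2)
    (hL : 0 < L)
    (hF2 : ∀ x y : H, ‖F x - F y‖ ≤ L * ‖x - y‖)
    (hτ2 : τ ≤ (lam1 - K) / (4 * L ^ 2))
    (w x y : ℕ → H)
    (hx : ∀ k, x (k + 1) = S (x k + τ • F (x k)) + w k)
    (hy : ∀ k, y (k + 1) = S (y k + τ • F (y k)) + w k)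
    (k : ℕ) (p : ℝ) (hp : 1 ≤ p) :
    ‖x k - y k‖ ^ (2 * p) ≤
      Real.exp (-(lam1 - K) * p * (k : ℝ) * τ) * ‖x 0 - y 0‖ ^ (2 * p) :=
  stmt_4_general S F lam1 τ K L hτ hS hF1 hL hF2 hτ2 w x y hx hy k p hp
end

section
/- With H, S, F, λ₁, τ, K, L as in the context, assume in addition 0 < τ ≤ (λ₁ − K)/(4L²). Then for all z, v ∈ H one has ‖S(z + τ F(z + v))‖² ≤ e^{−(λ₁ − K) τ} ‖z‖² + 2(τ² + τ/(λ₁ − K)) e^{−2 λ₁ τ} ‖F(v)‖². -/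
/-!
Expand `‖z + τ F(z+v)‖²`. The cross term is controlled by the one-sided Lipschitz bound (after
splitting `F(z+v) = (F(z+v) - F v) + F v`) and Young's inequality with weight `(λ₁ - K)/4`; the
quadratic term by the global Lipschitz bound, where `4L²τ ≤ λ₁ - K` makes its `‖z‖²`-part at most
`(λ₁ - K)τ/2`. This gives `‖z + τ F(z+v)‖² ≤ (1 + (λ₁ + K)τ)‖z‖² + 2(τ² + τ/(λ₁ - K))‖F v‖²`,
and the contraction `e^{-2λ₁τ}` of `S²` together with `1 + x ≤ eˣ` absorbs the factor `1 + (λ₁ + K)τ`.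
-/

open Real

theorem two_mul_le_mul_sq_add_sq_div {ε : ℝ} (hε : 0 < ε) (a b : ℝ) :
    2 * a * b ≤ ε * a ^ 2 + b ^ 2 / ε := by
  have key : ε * (ε * a ^ 2 + b ^ 2 / ε - 2 * a * b) = (ε * a - b) ^ 2 := by
    field_simp
    ring
  nlinarith [sq_nonneg (ε * a - b)]

theorem exp_neg_two_mul_mul_one_add_le (lam K τ : ℝ) :
    exp (-2 * lam * τ) * (1 + (lam + K) * τ) ≤ exp (-(lam - K) * τ) :=
  calc exp (-2 * lam * τ) * (1 + (lam + K) * τ)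
      ≤ exp (-2 * lam * τ) * exp ((lam + K) * τ) := by
        gcongr
        linarith [add_one_le_exp ((lam + K) * τ)]
    _ = exp (-(lam - K) * τ) := by rw [← exp_add]; ring_nf

theorem sq_le_exp_neg_two_mul_mul_sq {a b lam τ : ℝ} (ha : 0 ≤ a)
    (h : a ≤ exp (-lam * τ) * b) : a ^ 2 ≤ exp (-2 * lam * τ) * b ^ 2 :=
  calc a ^ 2 ≤ (exp (-lam * τ) * b) ^ 2 := pow_le_pow_left₀ ha h 2
    _ = exp (-2 * lam * τ) * b ^ 2 := by rw [mul_pow, ← exp_nat_mul]; ring_nf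

theorem norm_apply_add_sq_le {E G : Type*} [SeminormedAddCommGroup E]
    [SeminormedAddCommGroup G] {F : E → G} {L : ℝ} (hF : ∀ x y : E, ‖F x - F y‖ ≤ L * ‖x - y‖)
    (z v : E) :
    ‖F (z + v)‖ ^ 2 ≤ 2 * L ^ 2 * ‖z‖ ^ 2 + 2 * ‖F v‖ ^ 2 := by
  have hL := hF (z + v) v
  rw [add_sub_cancel_right] at hL
  have hle : ‖F (z + v)‖ ≤ L * ‖z‖ + ‖F v‖ := by
    linarith [norm_sub_norm_le (F (z + v)) (F v)]
  nlinarith [norm_nonneg (F (z + v)), sq_nonneg (L * ‖z‖ - ‖F v‖)]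

section EulerStep

variable {H : Type*} [NormedAddCommGroup H] [InnerProductSpace ℝ H] {F : H → H}

theorem inner_apply_add_le {K : ℝ}
    (hF : ∀ x y : H, inner ℝ (x - y) (F x - F y) ≤ K * ‖x - y‖ ^ 2) (z v : H) :
    inner ℝ z (F (z + v)) ≤ K * ‖z‖ ^ 2 + ‖z‖ * ‖F v‖ := by
  have hsplit : inner ℝ z (F (z + v)) = inner ℝ z (F (z + v) - F v) + inner ℝ z (F v) := by
    rw [← inner_add_right, sub_add_cancel]
  have hK := hF (z + v) v
  rw [add_sub_cancel_right] at hK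
  linarith [real_inner_le_norm z (F v)]

/-- `μ` plays the role of the spectral gap `λ₁ - K`. -/
theorem norm_add_smul_apply_add_sq_le {K L μ τ : ℝ}
    (hF1 : ∀ x y : H, inner ℝ (x - y) (F x - F y) ≤ K * ‖x - y‖ ^ 2)
    (hF2 : ∀ x y : H, ‖F x - F y‖ ≤ L * ‖x - y‖)
    (hμ : 0 < μ) (hτ : 0 ≤ τ) (hτμ : 4 * L ^ 2 * τ ≤ μ) (z v : H) :
    ‖z + τ • F (z + v)‖ ^ 2 ≤
      (1 + (2 * K + μ) * τ) * ‖z‖ ^ 2 + 2 * (τ ^ 2 + τ / μ) * ‖F v‖ ^ 2 := by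
  have hexpand : ‖z + τ • F (z + v)‖ ^ 2 =
      ‖z‖ ^ 2 + 2 * τ * inner ℝ z (F (z + v)) + τ ^ 2 * ‖F (z + v)‖ ^ 2 := by
    rw [norm_add_sq_real, real_inner_smul_right, norm_smul, norm_eq_abs, mul_pow, sq_abs]
    ring
  have hcross : 2 * τ * inner ℝ z (F (z + v)) ≤ 2 * τ * (K * ‖z‖ ^ 2 + ‖z‖ * ‖F v‖) :=
    mul_le_mul_of_nonneg_left (inner_apply_add_le hF1 z v) (by positivity)
  have hyoung : 2 * τ * (‖z‖ * ‖F v‖) ≤ τ * (μ / 2) * ‖z‖ ^ 2 + 2 * (τ / μ) * ‖F v‖ ^ 2 :=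
    calc 2 * τ * (‖z‖ * ‖F v‖) = τ * (2 * ‖z‖ * ‖F v‖) := by ring
      _ ≤ τ * (μ / 2 * ‖z‖ ^ 2 + ‖F v‖ ^ 2 / (μ / 2)) :=
        mul_le_mul_of_nonneg_left (two_mul_le_mul_sq_add_sq_div (half_pos hμ) _ _) hτ
      _ = τ * (μ / 2) * ‖z‖ ^ 2 + 2 * (τ / μ) * ‖F v‖ ^ 2 := by field_simp
  have hquad : τ ^ 2 * ‖F (z + v)‖ ^ 2 ≤ τ ^ 2 * (2 * L ^ 2 * ‖z‖ ^ 2 + 2 * ‖F v‖ ^ 2) :=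
    mul_le_mul_of_nonneg_left (norm_apply_add_sq_le hF2 z v) (sq_nonneg τ)
  have hgap : τ ^ 2 * (2 * L ^ 2) * ‖z‖ ^ 2 ≤ τ * (μ / 2) * ‖z‖ ^ 2 := by
    have hτL : τ ^ 2 * (2 * L ^ 2) ≤ τ * (μ / 2) := by nlinarith
    exact mul_le_mul_of_nonneg_right hτL (sq_nonneg _)
  rw [hexpand]
  linarith

end EulerStep

theorem stmt_5_general {H : Type*} [NormedAddCommGroup H] [InnerProductSpace ℝ H]
    (S : H →L[ℝ] H) (F : H → H) (lam1 τ K L : ℝ)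
    (hτ : 0 < τ)
    (hS : ∀ x : H, ‖S x‖ ≤ Real.exp (-lam1 * τ) * ‖x‖)
    (hK : K < lam1)
    (hF1 : ∀ x y : H, (inner ℝ (x - y) (F x - F y) : ℝ) ≤ K * ‖x - y‖ ^ 2)
    (hF2 : ∀ x y : H, ‖F x - F y‖ ≤ L * ‖x - y‖)
    (hτ2 : τ ≤ (lam1 - K) / (4 * L ^ 2))
    (z v : H) :
    ‖S (z + τ • F (z + v))‖ ^ 2 ≤
      Real.exp (-(lam1 - K) * τ) * ‖z‖ ^ 2 +
        2 * (τ ^ 2 + τ / (lam1 - K)) * Real.exp (-2 * lam1 * τ) * ‖F v‖ ^ 2 := by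
  have hgap : 0 < lam1 - K := sub_pos.mpr hK
  have hτgap : 4 * L ^ 2 * τ ≤ lam1 - K :=
    mul_comm τ _ ▸ mul_le_of_le_div₀ hgap.le (by positivity) hτ2
  have hstep := norm_add_smul_apply_add_sq_le hF1 hF2 hgap hτ.le hτgap z v
  rw [show 2 * K + (lam1 - K) = lam1 + K by ring] at hstep
  have hexp := mul_le_mul_of_nonneg_right (exp_neg_two_mul_mul_one_add_le lam1 K τ) (sq_nonneg ‖z‖)
  calc ‖S (z + τ • F (z + v))‖ ^ 2
      ≤ exp (-2 * lam1 * τ) * ‖z + τ • F (z + v)‖ ^ 2 :=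
        sq_le_exp_neg_two_mul_mul_sq (norm_nonneg _) (hS _)
    _ ≤ exp (-2 * lam1 * τ) * ((1 + (lam1 + K) * τ) * ‖z‖ ^ 2
          + 2 * (τ ^ 2 + τ / (lam1 - K)) * ‖F v‖ ^ 2) :=
        mul_le_mul_of_nonneg_left hstep (exp_pos _).le
    _ ≤ _ := by linarith

/-- One-step dissipativity bound from the proofs of Propositions 2.6 and 4.2 of the paper:
if `τ ≤ (λ₁ − K)/(4L²)`, then
`‖S(z + τF(z+v))‖² ≤ e^{−(λ₁−K)τ}‖z‖² + 2(τ² + τ/(λ₁−K)) e^{−2λ₁τ} ‖F(v)‖²`. -/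
theorem stmt_5 {H : Type*} [NormedAddCommGroup H] [InnerProductSpace ℝ H]
    (S : H →L[ℝ] H) (F : H → H) (lam1 τ K L : ℝ)
    (hlam1 : 0 < lam1) (hτ : 0 < τ)
    (hS : ∀ x : H, ‖S x‖ ≤ Real.exp (-lam1 * τ) * ‖x‖)
    (hK : K < lam1)
    (hF1 : ∀ x y : H, (inner ℝ (x - y) (F x - F y) : ℝ) ≤ K * ‖x - y‖ ^ 2)
    (hL : 0 < L)
    (hF2 : ∀ x y : H, ‖F x - F y‖ ≤ L * ‖x - y‖)
    (hτ2 : τ ≤ (lam1 - K) / (4 * L ^ 2))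
    (z v : H) :
    ‖S (z + τ • F (z + v))‖ ^ 2 ≤
      Real.exp (-(lam1 - K) * τ) * ‖z‖ ^ 2 +
        2 * (τ ^ 2 + τ / (lam1 - K)) * Real.exp (-2 * lam1 * τ) * ‖F v‖ ^ 2 :=
  stmt_5_general S F lam1 τ K L hτ hS hK hF1 hF2 hτ2 z v
end

section
/- Let (Ω, ℱ, ℙ) be a probability space, θ ∈ (0,1), μ > 0, m ≥ 1 an integer, and let Z_0, …, Z_m and D_0, …, D_{m−1} be nonnegative real random variables such that Z_{k+1} ≤ θ Z_k + D_k almost surely for every k < m. Then (i) for every k < m, 𝔼[exp(μ Z_{k+1})] ≤ θ 𝔼[exp(μ Z_k)] + (1 − θ) 𝔼[exp(μ D_k/(1 − θ))] (expectations taken in [0, ∞]); and (ii) if 𝔼[exp(μ Z_0)] ≤ A and 𝔼[exp(μ D_k/(1 − θ))] ≤ B for every k < m, then 𝔼[exp(μ Z_k)] ≤ A + B for every k ≤ m. -/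
open MeasureTheory
open scoped ENNReal

/-- Exponential-moment recursion from the proof of Proposition 3.3 of the paper
(estimate of `ℛ^{N,4}_{τ,3}`): if `Z_{k+1} ≤ θ Z_k + D_k` a.s. with `θ ∈ (0,1)`, then
(i) `𝔼 e^{μZ_{k+1}} ≤ θ 𝔼 e^{μZ_k} + (1−θ) 𝔼 e^{μD_k/(1−θ)}`, and
(ii) uniform bounds `𝔼 e^{μZ_0} ≤ A`, `𝔼 e^{μD_k/(1−θ)} ≤ B` give `𝔼 e^{μZ_k} ≤ A + B`. -/
theorem stmt_11 {Ω : Type*} {m0 : MeasurableSpace Ω} (μ : Measure Ω) [IsProbabilityMeasure μ]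
    (θ c : ℝ) (hθ0 : 0 < θ) (hθ1 : θ < 1) (hc : 0 < c)
    (m : ℕ) (hm : 1 ≤ m)
    (Z D : ℕ → Ω → ℝ)
    (hZmeas : ∀ k ≤ m, Measurable (Z k)) (hDmeas : ∀ k < m, Measurable (D k))
    (hZnn : ∀ k ≤ m, ∀ ω, 0 ≤ Z k ω) (hDnn : ∀ k < m, ∀ ω, 0 ≤ D k ω)
    (hrec : ∀ k < m, ∀ᵐ ω ∂μ, Z (k + 1) ω ≤ θ * Z k ω + D k ω) :
    (∀ k < m,
      ∫⁻ ω, ENNReal.ofReal (Real.exp (c * Z (k + 1) ω)) ∂μ ≤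
        ENNReal.ofReal θ * ∫⁻ ω, ENNReal.ofReal (Real.exp (c * Z k ω)) ∂μ +
          ENNReal.ofReal (1 - θ) *
            ∫⁻ ω, ENNReal.ofReal (Real.exp (c * D k ω / (1 - θ))) ∂μ) ∧
    (∀ A B : ℝ≥0∞,
      (∫⁻ ω, ENNReal.ofReal (Real.exp (c * Z 0 ω)) ∂μ) ≤ A →
      (∀ k < m, (∫⁻ ω, ENNReal.ofReal (Real.exp (c * D k ω / (1 - θ))) ∂μ) ≤ B) →
      ∀ k ≤ m, (∫⁻ ω, ENNReal.ofReal (Real.exp (c * Z k ω)) ∂μ) ≤ A + B) := by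
  have hθ' : (0:ℝ) < 1 - θ := by linarith
  have key : ∀ k < m,
      ∫⁻ ω, ENNReal.ofReal (Real.exp (c * Z (k + 1) ω)) ∂μ ≤
        ENNReal.ofReal θ * ∫⁻ ω, ENNReal.ofReal (Real.exp (c * Z k ω)) ∂μ +
          ENNReal.ofReal (1 - θ) *
            ∫⁻ ω, ENNReal.ofReal (Real.exp (c * D k ω / (1 - θ))) ∂μ := by
    intro k hk
    have hZm := hZmeas k hk.le
    have hDm := hDmeas k hk
    have hmono : ∫⁻ ω, ENNReal.ofReal (Real.exp (c * Z (k+1) ω)) ∂μ ≤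
        ∫⁻ ω, ENNReal.ofReal (θ * Real.exp (c * Z k ω)
          + (1-θ) * Real.exp (c * D k ω / (1-θ))) ∂μ := by
      refine lintegral_mono_ae ?_
      filter_upwards [hrec k hk] with ω hω
      have h1 : Real.exp (c * Z (k+1) ω) ≤
          Real.exp (θ * (c * Z k ω) + (1-θ) * (c * D k ω / (1-θ))) := by
        apply Real.exp_le_exp.2
        have he : (1-θ) * (c * D k ω / (1-θ)) = c * D k ω := by
          field_simp
        rw [he]
        nlinarith [mul_le_mul_of_nonneg_left hω hc.le]
      have h2 := convexOn_exp.2 (Set.mem_univ (c * Z k ω))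
        (Set.mem_univ (c * D k ω / (1-θ))) hθ0.le hθ'.le (by ring)
      simp only [smul_eq_mul] at h2
      exact ENNReal.ofReal_le_ofReal (h1.trans h2)
    refine hmono.trans (le_of_eq ?_)
    have heq : ∀ ω, ENNReal.ofReal (θ * Real.exp (c * Z k ω)
        + (1-θ) * Real.exp (c * D k ω / (1-θ)))
      = ENNReal.ofReal θ * ENNReal.ofReal (Real.exp (c * Z k ω)) +
        ENNReal.ofReal (1-θ) * ENNReal.ofReal (Real.exp (c * D k ω / (1-θ))) := by
      intro ω
      rw [ENNReal.ofReal_add (by positivity) (by positivity),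
        ENNReal.ofReal_mul hθ0.le, ENNReal.ofReal_mul hθ'.le]
    simp_rw [heq]
    rw [lintegral_add_left, lintegral_const_mul, lintegral_const_mul]
    · exact ((hDm.const_mul c).div_const _).exp.ennreal_ofReal
    · exact (hZm.const_mul c).exp.ennreal_ofReal
    · exact ((hZm.const_mul c).exp.ennreal_ofReal).const_mul _
  refine ⟨key, ?_⟩
  intro A B hA hB k
  induction k with
  | zero => exact fun _ => hA.trans le_self_add
  | succ n ih =>
    intro hk
    have hn : n < m := hk
    have ihn := ih hn.le
    have hθ1' : ENNReal.ofReal θ ≤ 1 := ENNReal.ofReal_le_one.2 hθ1.le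
    calc ∫⁻ ω, ENNReal.ofReal (Real.exp (c * Z (n+1) ω)) ∂μ
        ≤ ENNReal.ofReal θ * ∫⁻ ω, ENNReal.ofReal (Real.exp (c * Z n ω)) ∂μ +
          ENNReal.ofReal (1 - θ) *
            ∫⁻ ω, ENNReal.ofReal (Real.exp (c * D n ω / (1 - θ))) ∂μ := key n hn
      _ ≤ ENNReal.ofReal θ * (A + B) + ENNReal.ofReal (1-θ) * B :=
          add_le_add (mul_le_mul_right ihn _) (mul_le_mul_right (hB n hn) _)
      _ = ENNReal.ofReal θ * A + (ENNReal.ofReal θ + ENNReal.ofReal (1-θ)) * B := by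
          ring
      _ = ENNReal.ofReal θ * A + B := by
          rw [← ENNReal.ofReal_add hθ0.le hθ'.le]
          norm_num
      _ ≤ A + B := by
          gcongr
          calc ENNReal.ofReal θ * A ≤ 1 * A := mul_le_mul_left hθ1' A
            _ = A := one_mul A
end
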